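/- arXiv:2410.07039 — 3 statements merged into one kernel-verified Lean document; each statement's English description precedes it below -/
import Mathlib

section
/- Let Ξ = ℝ^n × ℝ. Fix N hospitals, each hospital i having a nonempty ambiguity set 𝒫_i of Borel probability measures on Ξ, and fix local model parameters θ_1, …, θ_N ∈ ℝ^n. Let f(x; θ) be a parametric model and ℒ a loss function such that for every (x, y) ∈ Ξ the map θ ↦ ℒ(f(x; θ), y) is convex on ℝ^n, such that for every θ and every ℚ ∈ ⋃_i 𝒫_i the map (x, y) ↦ ℒ(f(x; θ), y) is ℚ-integrable, and such that the robust transfer losses L_{i,j} = sup_{ℚ ∈ 𝒫_i} E_{(x,y)∼ℚ}[ℒ(f(x; θ_j), y)] are finite for all i, j. Let a_{i,k} ∈ {0,1} (i ∈ {1,…,N}, k ∈ {1,…,K}) satisfy Σ_{k=1}^K a_{i,k} = 1 for every i and Σ_{i=1}^N a_{i,k} ≥ 1 for every k. For hospital i let k(i) denote its coalition (the unique k with a_{i,k} = 1), let a_k = Σ_{j=1}^N a_{j,k}, and let θ_{S_k} = (1/a_k) Σ_{j=1}^N a_{j,k} θ_j. Then the coalition-formation objective satisfies Σ_{k=1}^K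 Σ_{i=1}^N a_{i,k} · sup_{ℚ ∈ 𝒫_i} E_{(x,y)∼ℚ}[ℒ(f(x; θ_{S_k}), y)] ≤ Σ_{i=1}^N Σ_{j=1}^N Σ_{k=1}^K (a_{i,k} · a_{j,k} / Σ_{j'=1}^N a_{j',k}) · L_{i,j}. -/
open MeasureTheory

/-- **Theorem 1 (CS-RCFL).** The coalition-formation objective (the sum over coalitions of
the robust losses of the aggregated models) is upper bounded by the fractional sum of
robust transfer losses. -/
theorem coalition_objective_le_fractional_sum
    {n N K : ℕ} (hK : 1 ≤ K)
    (P : Fin N → Set (Measure (EuclideanSpace ℝ (Fin n) × ℝ)))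
    (hPne : ∀ i, (P i).Nonempty)
    (hPprob : ∀ i, ∀ Q ∈ P i, IsProbabilityMeasure Q)
    (θ : Fin N → EuclideanSpace ℝ (Fin n))
    (f : EuclideanSpace ℝ (Fin n) → EuclideanSpace ℝ (Fin n) → ℝ)
    (ℒ : ℝ → ℝ → ℝ)
    (hconv : ∀ x y, ConvexOn ℝ Set.univ fun ϑ => ℒ (f x ϑ) y)
    (hint : ∀ ϑ : EuclideanSpace ℝ (Fin n), ∀ Q ∈ ⋃ i, P i,
      Integrable (fun ξ : EuclideanSpace ℝ (Fin n) × ℝ => ℒ (f ξ.1 ϑ) ξ.2) Q)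
    (L : Fin N → Fin N → ℝ)
    (hL : ∀ i j, L i j = sSup ((fun Q => ∫ ξ, ℒ (f ξ.1 (θ j)) ξ.2 ∂Q) '' P i))
    (hfin : ∀ i j : Fin N, BddAbove
      ((fun Q => ∫ ξ, ℒ (f ξ.1 (θ j)) ξ.2 ∂Q) '' P i))
    (a : Fin N → Fin K → ℕ)
    (ha01 : ∀ i k, a i k = 0 ∨ a i k = 1)
    (hasum : ∀ i, ∑ k, a i k = 1)
    (hnonempty : ∀ k, 1 ≤ ∑ i, a i k) :
    ∑ k, ∑ i, (a i k : ℝ) *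
        sSup ((fun Q => ∫ ξ,
          ℒ (f ξ.1 (((∑ j, a j k : ℕ) : ℝ)⁻¹ • ∑ j, (a j k : ℝ) • θ j)) ξ.2 ∂Q) '' P i)
      ≤ ∑ i, ∑ j, ∑ k,
          ((a i k : ℝ) * (a j k : ℝ) / ((∑ j', a j' k : ℕ) : ℝ)) * L i j := by
  classical
  have key : ∀ (k : Fin K) (i : Fin N),
      sSup ((fun Q => ∫ ξ,
          ℒ (f ξ.1 (((∑ j, a j k : ℕ) : ℝ)⁻¹ • ∑ j, (a j k : ℝ) • θ j)) ξ.2 ∂Q) '' P i)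
        ≤ ∑ j, ((a j k : ℝ) / ((∑ j', a j' k : ℕ) : ℝ)) * L i j := by
    intro k i
    set m : ℝ := ((∑ j', a j' k : ℕ) : ℝ) with hm
    have hmpos : 0 < m := by
      have := hnonempty k
      have : (0 : ℕ) < ∑ j', a j' k := this
      rw [hm]
      exact_mod_cast this
    set w : Fin N → ℝ := fun j => (a j k : ℝ) / m with hwdef
    have hw0 : ∀ j ∈ Finset.univ, (0:ℝ) ≤ w j := fun j _ =>
      div_nonneg (Nat.cast_nonneg _) hmpos.le
    have hw1 : ∑ j, w j = 1 := by
      rw [← Finset.sum_div]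
      rw [div_eq_one_iff_eq hmpos.ne']
      simp [hm]
    have hθ : (((∑ j, a j k : ℕ) : ℝ)⁻¹ • ∑ j, (a j k : ℝ) • θ j) = ∑ j, w j • θ j := by
      rw [Finset.smul_sum]
      refine Finset.sum_congr rfl fun j _ => ?_
      rw [smul_smul]
      congr 1
      simp [hwdef, hm, div_eq_inv_mul]
    have hpt : ∀ ξ : EuclideanSpace ℝ (Fin n) × ℝ,
        ℒ (f ξ.1 (∑ j, w j • θ j)) ξ.2 ≤ ∑ j, w j * ℒ (f ξ.1 (θ j)) ξ.2 := fun ξ =>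
      (hconv ξ.1 ξ.2).map_sum_le hw0 hw1 (fun j _ => Set.mem_univ _)
    apply csSup_le ((hPne i).image _)
    rintro _ ⟨Q, hQ, rfl⟩
    have hQmem : Q ∈ ⋃ i, P i := Set.mem_iUnion.2 ⟨i, hQ⟩
    calc ∫ ξ, ℒ (f ξ.1 (((∑ j, a j k : ℕ) : ℝ)⁻¹ • ∑ j, (a j k : ℝ) • θ j)) ξ.2 ∂Q
        ≤ ∫ ξ, ∑ j, w j * ℒ (f ξ.1 (θ j)) ξ.2 ∂Q := by
          rw [hθ]
          exact integral_mono (hint _ Q hQmem)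
            (integrable_finset_sum _ fun j _ => ((hint (θ j) Q hQmem).const_mul _))
            (fun ξ => hpt ξ)
      _ = ∑ j, w j * ∫ ξ, ℒ (f ξ.1 (θ j)) ξ.2 ∂Q := by
          rw [integral_finset_sum _ fun j _ => ((hint (θ j) Q hQmem).const_mul _)]
          exact Finset.sum_congr rfl fun j _ => integral_const_mul _ _
      _ ≤ ∑ j, w j * L i j := by
          refine Finset.sum_le_sum fun j _ => ?_
          refine mul_le_mul_of_nonneg_left ?_ (hw0 j (Finset.mem_univ j))
          rw [hL i j]
          exact le_csSup (hfin i j) ⟨Q, hQ, rfl⟩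
  calc ∑ k, ∑ i, (a i k : ℝ) *
        sSup ((fun Q => ∫ ξ,
          ℒ (f ξ.1 (((∑ j, a j k : ℕ) : ℝ)⁻¹ • ∑ j, (a j k : ℝ) • θ j)) ξ.2 ∂Q) '' P i)
      ≤ ∑ k, ∑ i, (a i k : ℝ) *
          ∑ j, ((a j k : ℝ) / ((∑ j', a j' k : ℕ) : ℝ)) * L i j := by
        refine Finset.sum_le_sum fun k _ => Finset.sum_le_sum fun i _ => ?_
        exact mul_le_mul_of_nonneg_left (key k i) (Nat.cast_nonneg _)
    _ = ∑ i, ∑ j, ∑ k,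
          ((a i k : ℝ) * (a j k : ℝ) / ((∑ j', a j' k : ℕ) : ℝ)) * L i j := by
        rw [Finset.sum_comm]
        refine Finset.sum_congr rfl fun i _ => ?_
        simp_rw [Finset.mul_sum]
        rw [Finset.sum_comm]
        refine Finset.sum_congr rfl fun j _ => Finset.sum_congr rfl fun k _ => ?_
        ring
end

section
/- Fix N, K ≥ 1, local model parameters θ_1, …, θ_N ∈ ℝ^n, and real constants c_{i,j} for i, j ∈ {1,…,N} (representing the empirical transfer losses E_{(x,y)∼P̂_i}[|θ_j^⊤x − y|]). Let 𝒜 be the set of feasible binary assignments a = (a_{i,k}) ∈ {0,1}^{N×K} with Σ_{k=1}^K a_{i,k} = 1 for every i and Σ_{i=1}^N a_{i,k} ≥ 1 for every k. For ε ≥ 0 define the objective J_ε(a) = Σ_{k=1}^K Σ_{i=1}^N Σ_{j=1}^N (a_{i,k} · a_{j,k} / Σ_{j'=1}^N a_{j',k}) · (ε · √(‖θ_j‖₂² + 1) + c_{i,j}). Then the set of minimizers argmin_{a ∈ 𝒜} J_ε(a) is the same for every ε ≥ 0; i.e., the optimal coalition structure is independent of the common ambiguity-set radius ε. -/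
/-! Only the row sums of a feasible assignment matter: for each `j`, the weights
`a i k * a j k / |C_k|` sum over `i` and `k` to `∑ k, a j k = 1`, since every member of a
coalition averages over that coalition. Hence the `ε`-part of `J ε a` is
`ε * ∑ j, √(‖θ j‖² + 1)`, the same for every feasible `a`, and adding a constant to an
objective does not change its set of minimizers. -/

open Finset

theorem sum_sum_mul_div_sum_mul {ι : Type*} [Fintype ι] (a : ι → ℕ) (s : ι → ℝ) :
    ∑ i, ∑ j, ((a i : ℝ) * (a j : ℝ) / ((∑ j', a j' : ℕ) : ℝ)) * s j
      = ∑ j, (a j : ℝ) * s j := by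
  by_cases hzero : ∑ j', a j' = 0
  · have ha : ∀ j, a j = 0 := fun j => (Finset.sum_eq_zero_iff.mp hzero) j (mem_univ j)
    simp [ha]
  · have hpos : ((∑ j', a j' : ℕ) : ℝ) ≠ 0 := by exact_mod_cast hzero
    calc ∑ i, ∑ j, ((a i : ℝ) * (a j : ℝ) / ((∑ j', a j' : ℕ) : ℝ)) * s j
        = (∑ i, (a i : ℝ)) / ((∑ j', a j' : ℕ) : ℝ) * ∑ j, (a j : ℝ) * s j := by
          rw [sum_div, sum_mul]
          refine sum_congr rfl fun i _ => ?_
          rw [mul_sum]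
          exact sum_congr rfl fun j _ => by ring
      _ = ∑ j, (a j : ℝ) * s j := by
          rw [← Nat.cast_sum, div_self hpos, one_mul]

theorem sum_coalition_weights_mul {ι κ : Type*} [Fintype ι] [Fintype κ]
    (a : ι → κ → ℕ) (s : ι → ℝ) (hrow : ∀ i, ∑ k, a i k = 1) :
    ∑ k, ∑ i, ∑ j, ((a i k : ℝ) * (a j k : ℝ) / ((∑ j', a j' k : ℕ) : ℝ)) * s j
      = ∑ j, s j := by
  simp only [sum_sum_mul_div_sum_mul fun i => a i _]
  rw [sum_comm]
  refine sum_congr rfl fun j _ => ?_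
  rw [← sum_mul, ← Nat.cast_sum, hrow j, Nat.cast_one, one_mul]

theorem sep_forall_le_eq_of_eq_add_const {α : Type*} (A : Set α) (f g : α → ℝ) (C : ℝ)
    (hfg : ∀ a ∈ A, f a = g a + C) :
    {a ∈ A | ∀ b ∈ A, f a ≤ f b} = {a ∈ A | ∀ b ∈ A, g a ≤ g b} := by
  ext a
  refine and_congr_right fun ha => forall₂_congr fun b hb => ?_
  rw [hfg a ha, hfg b hb, add_le_add_iff_right]

theorem argmin_coalition_independent_of_radius_general
    {n N K : ℕ}
    (θ : Fin N → EuclideanSpace ℝ (Fin n))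
    (c : Fin N → Fin N → ℝ)
    (A : Set (Fin N → Fin K → ℕ))
    (hA : A = {a | (∀ i k, a i k = 0 ∨ a i k = 1) ∧ (∀ i, ∑ k, a i k = 1) ∧
      (∀ k, 1 ≤ ∑ i, a i k)})
    (J : ℝ → (Fin N → Fin K → ℕ) → ℝ)
    (hJ : ∀ ε a, J ε a = ∑ k, ∑ i, ∑ j,
        ((a i k : ℝ) * (a j k : ℝ) / ((∑ j', a j' k : ℕ) : ℝ)) *
          (ε * Real.sqrt (‖θ j‖ ^ 2 + 1) + c i j)) :
    ∀ ε₁ ε₂ : ℝ, 0 ≤ ε₁ → 0 ≤ ε₂ →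
      {a ∈ A | ∀ b ∈ A, J ε₁ a ≤ J ε₁ b} = {a ∈ A | ∀ b ∈ A, J ε₂ a ≤ J ε₂ b} := by
  have hsplit : ∀ ε, ∀ a ∈ A, J ε a = J 0 a + ε * ∑ j, Real.sqrt (‖θ j‖ ^ 2 + 1) := by
    rintro ε a ha
    rw [hA] at ha
    rw [hJ, hJ, ← sum_coalition_weights_mul a _ ha.2.1]
    simp only [zero_mul, zero_add, mul_add, sum_add_distrib, mul_sum]
    rw [add_comm]
    congr 1
    exact sum_congr rfl fun k _ => sum_congr rfl fun i _ => sum_congr rfl fun j _ => by ring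
  intro ε₁ ε₂ _ _
  rw [sep_forall_le_eq_of_eq_add_const A _ _ _ (hsplit ε₁),
    sep_forall_le_eq_of_eq_add_const A _ _ _ (hsplit ε₂)]

/-- **Proposition 1 (CS-RCFL, linear regression with absolute loss).** If all hospitals
use the same Wasserstein radius `ε ≥ 0`, the set of optimal coalition structures for the
coalition-formation problem is independent of `ε`. -/
theorem argmin_coalition_independent_of_radius
    {n N K : ℕ} (hN : 1 ≤ N) (hK : 1 ≤ K)
    (θ : Fin N → EuclideanSpace ℝ (Fin n))
    (c : Fin N → Fin N → ℝ)
    (A : Set (Fin N → Fin K → ℕ))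
    (hA : A = {a | (∀ i k, a i k = 0 ∨ a i k = 1) ∧ (∀ i, ∑ k, a i k = 1) ∧
      (∀ k, 1 ≤ ∑ i, a i k)})
    (J : ℝ → (Fin N → Fin K → ℕ) → ℝ)
    (hJ : ∀ ε a, J ε a = ∑ k, ∑ i, ∑ j,
        ((a i k : ℝ) * (a j k : ℝ) / ((∑ j', a j' k : ℕ) : ℝ)) *
          (ε * Real.sqrt (‖θ j‖ ^ 2 + 1) + c i j)) :
    ∀ ε₁ ε₂ : ℝ, 0 ≤ ε₁ → 0 ≤ ε₂ →
      {a ∈ A | ∀ b ∈ A, J ε₁ a ≤ J ε₁ b} = {a ∈ A | ∀ b ∈ A, J ε₂ a ≤ J ε₂ b} :=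
  argmin_coalition_independent_of_radius_general θ c A hA J hJ
end

section
/- Fix N, K ≥ 1, local model parameters θ_1, …, θ_N ∈ ℝ^n, and real constants c_{i,j} for i, j ∈ {1,…,N}. Let a = (a_{i,k}) ∈ {0,1}^{N×K} satisfy Σ_{k=1}^K a_{i,k} = 1 for every i and Σ_{i=1}^N a_{i,k} ≥ 1 for every k. For ε ≥ 0 define J_ε(a) = Σ_{k=1}^K Σ_{i=1}^N Σ_{j=1}^N (a_{i,k} · a_{j,k} / Σ_{j'=1}^N a_{j',k}) · (ε · √(‖θ_j‖₂² + 1) + c_{i,j}). Then J_ε(a) = ε · Σ_{j=1}^N √(‖θ_j‖₂² + 1) + J_0(a); in particular the ε-dependent part of the objective is a constant that does not depend on the assignment a. -/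
/-! The `ε`-term `ε √(‖θ j‖² + 1)` depends only on `j`. Inside a coalition the weights
`a i k a j k / Σ_{j'} a j' k` sum over `i` to `a j k`, so each coalition contributes the
`ε`-terms of its own members once; since every hospital lies in exactly one coalition,
summing over coalitions yields each `j` exactly once. -/

open Finset

theorem sum_sum_mul_div_sum_mul_eq_sum_mul {ι 𝕜 : Type*} [Fintype ι] [Field 𝕜]
    (w f : ι → 𝕜) (hw : ∑ i, w i ≠ 0) :
    ∑ i, ∑ j, w i * w j / (∑ i', w i') * f j = ∑ j, w j * f j := by
  rw [sum_comm]
  refine sum_congr rfl fun j _ => ?_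
  calc ∑ i, w i * w j / (∑ i', w i') * f j
      = (∑ i, w i) * (w j * f j) / ∑ i', w i' := by
        rw [sum_mul, sum_div]
        exact sum_congr rfl fun i _ => by ring
    _ = w j * f j := mul_div_cancel_left₀ _ hw

theorem sum_sum_mul_of_sum_eq_one {ι κ R : Type*} [Fintype ι] [Fintype κ] [Semiring R]
    (w : ι → κ → R) (hw : ∀ i, ∑ k, w i k = 1) (f : ι → R) :
    ∑ k, ∑ i, w i k * f i = ∑ i, f i := by
  rw [sum_comm]
  simp only [← sum_mul, hw, one_mul]

theorem objective_decomposition_common_radius_general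
    {n N K : ℕ}
    (θ : Fin N → EuclideanSpace ℝ (Fin n))
    (c : Fin N → Fin N → ℝ)
    (a : Fin N → Fin K → ℕ)
    (hasum : ∀ i, ∑ k, a i k = 1)
    (hnonempty : ∀ k, 1 ≤ ∑ i, a i k)
    (J : ℝ → (Fin N → Fin K → ℕ) → ℝ)
    (hJ : ∀ ε b, J ε b = ∑ k, ∑ i, ∑ j,
        ((b i k : ℝ) * (b j k : ℝ) / ((∑ j', b j' k : ℕ) : ℝ)) *
          (ε * Real.sqrt (‖θ j‖ ^ 2 + 1) + c i j)) :
    ∀ ε : ℝ, 0 ≤ ε →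
      J ε a = ε * (∑ j, Real.sqrt (‖θ j‖ ^ 2 + 1)) + J 0 a := by
  intro ε _
  have hsize : ∀ k, ∑ i, (a i k : ℝ) ≠ 0 := fun k => by
    exact_mod_cast Nat.one_le_iff_ne_zero.mp (hnonempty k)
  have hrow : ∀ i, ∑ k, (a i k : ℝ) = 1 := fun i => by exact_mod_cast hasum i
  simp only [hJ, Nat.cast_sum, zero_mul, zero_add, mul_add, sum_add_distrib]
  congr 1
  calc ∑ k, ∑ i, ∑ j, (a i k : ℝ) * a j k / (∑ j', (a j' k : ℝ)) * (ε * √(‖θ j‖ ^ 2 + 1))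
      = ∑ k, ∑ j, (a j k : ℝ) * (ε * √(‖θ j‖ ^ 2 + 1)) :=
        sum_congr rfl fun k _ => sum_sum_mul_div_sum_mul_eq_sum_mul _ _ (hsize k)
    _ = ε * ∑ j, √(‖θ j‖ ^ 2 + 1) := by
        rw [sum_sum_mul_of_sum_eq_one _ hrow, mul_sum]

/-- **Decomposition in the proof of Proposition 1 (CS-RCFL).** For a feasible coalition
assignment `a`, the objective with common radius `ε` equals the `ε`-independent objective
`J 0 a` plus the assignment-independent constant `ε · Σ_j √(‖θ j‖² + 1)`. -/
theorem objective_decomposition_common_radius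
    {n N K : ℕ} (hN : 1 ≤ N) (hK : 1 ≤ K)
    (θ : Fin N → EuclideanSpace ℝ (Fin n))
    (c : Fin N → Fin N → ℝ)
    (a : Fin N → Fin K → ℕ)
    (ha01 : ∀ i k, a i k = 0 ∨ a i k = 1)
    (hasum : ∀ i, ∑ k, a i k = 1)
    (hnonempty : ∀ k, 1 ≤ ∑ i, a i k)
    (J : ℝ → (Fin N → Fin K → ℕ) → ℝ)
    (hJ : ∀ ε b, J ε b = ∑ k, ∑ i, ∑ j,
        ((b i k : ℝ) * (b j k : ℝ) / ((∑ j', b j' k : ℕ) : ℝ)) *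
          (ε * Real.sqrt (‖θ j‖ ^ 2 + 1) + c i j)) :
    ∀ ε : ℝ, 0 ≤ ε →
      J ε a = ε * (∑ j, Real.sqrt (‖θ j‖ ^ 2 + 1)) + J 0 a :=
  objective_decomposition_common_radius_general θ c a hasum hnonempty J hJ
end
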